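/- Consider a two-sender instance over a finite field F with parts P_1, P_2, P_{12}, side-information sets K_i, and eavesdropper set A with A_T = A ∩ P_T. Assume the interactions between each P_j (j = 1,2) and P_{12} are fully participated in both directions: P_{12} ⊆ K_i for every i ∈ P_1 ∪ P_2, and P_1 ∪ P_2 ⊆ K_j for every j ∈ P_{12}. Suppose for each T ∈ {1, 2, {1,2}} there exists a matrix G_T ∈ F^{l_T×|P_T|} that is a valid index code for the sub-instance induced on P_T and weakly secure against A_T. Then there exists a valid weakly secure two-sender linear index code for the full instance of total length max{l_{12}, l_1 + l_2}. In particular, the optimal two-sender codelength satisfies l* ≤ max{l*_{12}, l*_1 + l*_2}. -/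

import Mathlib

open Matrix Sum

attribute [local instance] Classical.propDecidable

noncomputable section

variable (F : Type*) [Field F] [Fintype F]

/-- The row space of a matrix: the span of its rows. -/
def rowSpace {ρ ι : Type*} (G : Matrix ρ ι F) : Submodule F (ι → F) :=
  Submodule.span F (Set.range fun r j => G r j)

/-- Weak security of the linear code `x ↦ G x` against an eavesdropper knowing `x j` for
`j ∈ A`: for every `i ∉ A` and every `u` supported in `A`, `u + e i` is not in the
row space of `G`. -/
def WeaklySecure {ρ ι : Type*} (G : Matrix ρ ι F) (A : Set ι) : Prop :=
  ∀ i ∉ A, ∀ u : ι → F, (∀ j, u j ≠ 0 → j ∈ A) →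
    u + Pi.single i (1 : F) ∉ rowSpace F G

/-- `G` is a valid index code for side-information sets `K`: every receiver `i` can
decode `x i` from the codeword `G.mulVec x` and its side information `x|_{K i}`. -/
def ValidCode {ρ ι : Type*} [Fintype ι] (K : ι → Set ι) (G : Matrix ρ ι F) : Prop :=
  ∀ i : ι, ∃ D : (ρ → F) → (↥(K i) → F) → F,
    ∀ x : ι → F, D (G.mulVec x) (fun j => x j.1) = x i

/-- `G` has two-sender form for the parts `P1`, `P2`: its rows split into sender-1 rows,
zero on all columns in `P2`, and sender-2 rows, zero on all columns in `P1`. -/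
def TwoSenderForm {ρ ι : Type*} (P1 P2 : Set ι) (G : Matrix ρ ι F) : Prop :=
  ∃ S : Set ρ, (∀ r ∈ S, ∀ j ∈ P2, G r j = 0) ∧ (∀ r ∉ S, ∀ j ∈ P1, G r j = 0)

/-- Achievable lengths of valid weakly secure (single-sender) linear index codes. -/
def oneLens {ι : Type*} [Fintype ι] (K : ι → Set ι) (A : Set ι) : Set ℕ :=
  {l | ∃ G : Matrix (Fin l) ι F, ValidCode F K G ∧ WeaklySecure F G A}

/-- Achievable total lengths of valid weakly secure two-sender linear index codes. -/
def twoLens {ι : Type*} [Fintype ι] (P1 P2 : Set ι) (K : ι → Set ι) (A : Set ι) :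
    Set ℕ :=
  {l | ∃ G : Matrix (Fin l) ι F,
      TwoSenderForm F P1 P2 G ∧ ValidCode F K G ∧ WeaklySecure F G A}

/-- Side-information sets of the sub-instance induced on `S`. -/
def subK {ι : Type*} (K : ι → Set ι) (S : Set ι) : ↥S → Set ↥S :=
  fun i => {j : ↥S | (j : ι) ∈ K (i : ι)}

/-- Extend a matrix with columns indexed by `↥S` to one with columns indexed by `ι`,
filling the new columns with zeros. -/
def extendCols {ρ ι : Type*} (S : Set ι) (G : Matrix ρ ↥S F) : Matrix ρ ι F :=
  Matrix.of fun r => Function.extend (Subtype.val) (G r) (fun _ => 0)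

/-- Zero-pad a matrix with `l` rows to one with `L` rows. -/
def padMat {ι : Type*} (L : ℕ) {l : ℕ} (G : Matrix (Fin l) ι F) : Matrix (Fin L) ι F :=
  Matrix.of fun r j => if h : (r : ℕ) < l then G ⟨(r : ℕ), h⟩ j else 0

/-
Stack `G₁` on the first `l₁` rows and `G₂` on the next `l₂` rows, and overlay `G₁₂` on the first
`l₁₂` rows. A receiver in `P₁ ∪ P₂` knows every message of `P₁₂` and can cancel the `G₁₂` part of
its rows, leaving its own sub-code; a receiver in `P₁₂` likewise cancels the `P₁ ∪ P₂` part. For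
weak security, the restriction of the code to the columns of a part `P_T` has its rows in the row
space of `G_T`, so a leak of `u + eᵢ` with `i ∈ P_T` would be a leak of `G_T`. Applied to optimal
codes for the three parts, the construction gives the bound on `l*`.
-/

section StackRows

variable {α ι : Type*} {m n : ℕ}

def stackRows (G : Matrix (Fin m) ι α) (H : Matrix (Fin n) ι α) : Matrix (Fin (m + n)) ι α :=
  Matrix.of (Fin.append G H)

@[simp]
theorem stackRows_castAdd (G : Matrix (Fin m) ι α) (H : Matrix (Fin n) ι α) (r : Fin m) :
    stackRows G H (Fin.castAdd n r) = G r :=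
  Fin.append_left G H r

@[simp]
theorem stackRows_natAdd (G : Matrix (Fin m) ι α) (H : Matrix (Fin n) ι α) (r : Fin n) :
    stackRows G H (Fin.natAdd m r) = H r :=
  Fin.append_right G H r

@[simp]
theorem stackRows_submatrix_castAdd (G : Matrix (Fin m) ι α) (H : Matrix (Fin n) ι α) :
    (stackRows G H).submatrix (Fin.castAdd n) id = G := by
  ext r j
  simp

@[simp]
theorem stackRows_submatrix_natAdd (G : Matrix (Fin m) ι α) (H : Matrix (Fin n) ι α) :
    (stackRows G H).submatrix (Fin.natAdd m) id = H := by
  ext r j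
  simp

theorem stackRows_submatrix_cols {κ : Type*} (G : Matrix (Fin m) ι α) (H : Matrix (Fin n) ι α)
    (f : κ → ι) :
    (stackRows G H).submatrix id f = stackRows (G.submatrix id f) (H.submatrix id f) := by
  ext r j
  induction r using Fin.addCases <;> simp

theorem stackRows_apply_eq_zero [Zero α] {G : Matrix (Fin m) ι α} {H : Matrix (Fin n) ι α}
    {j : ι} (hG : ∀ r, G r j = 0) (hH : ∀ r, H r j = 0) (r : Fin (m + n)) :
    stackRows G H r j = 0 := by
  induction r using Fin.addCases <;> simp [hG, hH]

@[simp]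
theorem stackRows_zero [Zero α] :
    stackRows (0 : Matrix (Fin m) ι α) (0 : Matrix (Fin n) ι α) = 0 := by
  ext r j
  exact stackRows_apply_eq_zero (G := 0) (H := 0) (fun _ => rfl) (fun _ => rfl) r

end StackRows

section RowSpace

variable {𝕜 : Type*} [Field 𝕜] {ρ ι : Type*}

theorem rowSpace_le_iff (G : Matrix ρ ι 𝕜) (p : Submodule 𝕜 (ι → 𝕜)) :
    rowSpace 𝕜 G ≤ p ↔ ∀ r, G r ∈ p := by
  rw [rowSpace, Submodule.span_le, Set.range_subset_iff]
  rfl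

theorem row_mem_rowSpace (G : Matrix ρ ι 𝕜) (r : ρ) : G r ∈ rowSpace 𝕜 G :=
  (rowSpace_le_iff G _).1 le_rfl r

@[simp]
theorem rowSpace_zero : rowSpace 𝕜 (0 : Matrix ρ ι 𝕜) = ⊥ :=
  eq_bot_iff.2 <| (rowSpace_le_iff _ _).2 fun _ => zero_mem _

theorem rowSpace_stackRows_le {m n : ℕ} (G : Matrix (Fin m) ι 𝕜) (H : Matrix (Fin n) ι 𝕜) :
    rowSpace 𝕜 (stackRows G H) ≤ rowSpace 𝕜 G ⊔ rowSpace 𝕜 H := by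
  refine (rowSpace_le_iff _ _).2 fun r => ?_
  induction r using Fin.addCases with
  | left r => simpa using Submodule.mem_sup_left (row_mem_rowSpace G r)
  | right r => simpa using Submodule.mem_sup_right (row_mem_rowSpace H r)

theorem rowSpace_submatrix_cols {κ : Type*} (G : Matrix ρ ι 𝕜) (f : κ → ι) :
    rowSpace 𝕜 (G.submatrix id f) = (rowSpace 𝕜 G).map (LinearMap.funLeft 𝕜 𝕜 f) := by
  rw [rowSpace, rowSpace, Submodule.map_span, ← Set.range_comp]
  rfl

theorem WeaklySecure.of_restrict {σ : Type*} {A S : Set ι} {G : Matrix ρ ι 𝕜}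
    {H : Matrix σ S 𝕜} (hH : WeaklySecure 𝕜 H (Subtype.val ⁻¹' A))
    (hGH : rowSpace 𝕜 (G.submatrix id Subtype.val) ≤ rowSpace 𝕜 H) {i : ι} (hi : i ∈ S)
    (hiA : i ∉ A) {u : ι → 𝕜} (hu : ∀ j, u j ≠ 0 → j ∈ A) :
    u + Pi.single i 1 ∉ rowSpace 𝕜 G := by
  intro hmem
  have hres := Submodule.mem_map_of_mem (f := LinearMap.funLeft 𝕜 𝕜 (Subtype.val : S → ι)) hmem
  rw [← rowSpace_submatrix_cols] at hres
  refine hH ⟨i, hi⟩ hiA (fun j => u j) (fun j hj => hu j hj) (hGH ?_)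
  convert hres using 1
  ext j
  simp [Pi.single_apply, Subtype.ext_iff]

end RowSpace

section PaddingAndExtension

variable {𝕜 : Type*} [Field 𝕜] {ρ ι : Type*}

theorem extendCols_apply_val {S : Set ι} (H : Matrix ρ S 𝕜) (r : ρ) (j : S) :
    extendCols 𝕜 S H r j = H r j :=
  Subtype.val_injective.extend_apply (H r) (fun _ => 0) j

theorem extendCols_apply_of_notMem {S : Set ι} (H : Matrix ρ S 𝕜) (r : ρ) {j : ι}
    (hj : j ∉ S) : extendCols 𝕜 S H r j = 0 :=
  Function.extend_apply' (H r) (fun _ => 0) j fun ⟨j', hj'⟩ => hj (hj' ▸ j'.2)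

@[simp]
theorem extendCols_submatrix_val (S : Set ι) (H : Matrix ρ S 𝕜) :
    (extendCols 𝕜 S H).submatrix id Subtype.val = H := by
  ext r j
  exact extendCols_apply_val H r j

theorem extendCols_submatrix_val_of_disjoint {S T : Set ι} (hST : Disjoint S T)
    (H : Matrix ρ S 𝕜) : (extendCols 𝕜 S H).submatrix id (Subtype.val : T → ι) = 0 := by
  ext r j
  exact extendCols_apply_of_notMem H r (Set.disjoint_right.1 hST j.2)

theorem extendCols_mulVec [Fintype ι] {S : Set ι} (H : Matrix ρ S 𝕜) (x : ι → 𝕜) :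
    extendCols 𝕜 S H *ᵥ x = H *ᵥ fun j => x j := by
  ext r
  have hout : ∑ j : {j // j ∉ S}, extendCols 𝕜 S H r j * x j = 0 :=
    Finset.sum_eq_zero fun j _ => by rw [extendCols_apply_of_notMem H r j.2, zero_mul]
  rw [mulVec, dotProduct, ← Fintype.sum_subtype_add_sum_subtype (· ∈ S), hout, add_zero]
  simp only [extendCols_apply_val]
  rfl

variable (L : ℕ) {l : ℕ}

theorem padMat_apply_of_lt (G : Matrix (Fin l) ι 𝕜) (r : Fin L) (j : ι) (hr : (r : ℕ) < l) :
    padMat 𝕜 L G r j = G ⟨r, hr⟩ j :=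
  dif_pos hr

theorem padMat_apply_of_le (G : Matrix (Fin l) ι 𝕜) (r : Fin L) (j : ι) (hr : l ≤ (r : ℕ)) :
    padMat 𝕜 L G r j = 0 :=
  dif_neg hr.not_gt

theorem padMat_apply_eq_zero {G : Matrix (Fin l) ι 𝕜} {j : ι} (hj : ∀ r, G r j = 0)
    (r : Fin L) : padMat 𝕜 L G r j = 0 := by
  by_cases hr : (r : ℕ) < l
  · rw [padMat_apply_of_lt L G r j hr, hj]
  · exact padMat_apply_of_le L G r j (not_lt.1 hr)

@[simp]
theorem padMat_zero : padMat 𝕜 L (0 : Matrix (Fin l) ι 𝕜) = 0 := by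
  ext r j
  exact padMat_apply_eq_zero L (fun _ => rfl) r

theorem padMat_submatrix_cols {κ : Type*} (G : Matrix (Fin l) ι 𝕜) (f : κ → ι) :
    (padMat 𝕜 L G).submatrix id f = padMat 𝕜 L (G.submatrix id f) :=
  rfl

@[simp]
theorem padMat_submatrix_castLE {L : ℕ} (h : l ≤ L) (G : Matrix (Fin l) ι 𝕜) :
    (padMat 𝕜 L G).submatrix (Fin.castLE h) id = G := by
  ext r j
  exact padMat_apply_of_lt L G _ j r.2

theorem rowSpace_padMat_le (G : Matrix (Fin l) ι 𝕜) :
    rowSpace 𝕜 (padMat 𝕜 L G) ≤ rowSpace 𝕜 G := by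
  refine (rowSpace_le_iff _ _).2 fun r => ?_
  by_cases hr : (r : ℕ) < l
  · convert row_mem_rowSpace G ⟨r, hr⟩ using 1
    ext j
    exact padMat_apply_of_lt L G r j hr
  · convert zero_mem (rowSpace 𝕜 G)
    ext j
    exact padMat_apply_of_le L G r j (not_lt.1 hr)

end PaddingAndExtension

section TwoSenderForm

variable {𝕜 : Type*} [Field 𝕜] {ρ ι : Type*} {P1 P2 : Set ι}

theorem twoSenderForm_stackRows {m n : ℕ} {G : Matrix (Fin m) ι 𝕜} {H : Matrix (Fin n) ι 𝕜}
    (hG : ∀ r, ∀ j ∈ P2, G r j = 0) (hH : ∀ r, ∀ j ∈ P1, H r j = 0) :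
    TwoSenderForm 𝕜 P1 P2 (stackRows G H) := by
  refine ⟨Set.range (Fin.castAdd n), ?_, fun r hr j hj => ?_⟩
  · rintro _ ⟨r, rfl⟩ j hj
    simpa using hG r j hj
  · induction r using Fin.addCases with
    | left r => exact absurd ⟨r, rfl⟩ hr
    | right r => simpa using hH r j hj

theorem TwoSenderForm.padMat (L : ℕ) {l : ℕ} {G : Matrix (Fin l) ι 𝕜}
    (hG : TwoSenderForm 𝕜 P1 P2 G) : TwoSenderForm 𝕜 P1 P2 (padMat 𝕜 L G) := by
  obtain ⟨S, hS, hSc⟩ := hG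
  refine ⟨{r | ∃ h : (r : ℕ) < l, ⟨r, h⟩ ∈ S}, fun r ⟨hr, hrS⟩ j hj => ?_, fun r hr j hj => ?_⟩
  · rw [padMat_apply_of_lt L G r j hr, hS _ hrS j hj]
  · by_cases hrl : (r : ℕ) < l
    · rw [padMat_apply_of_lt L G r j hrl, hSc _ (fun hrS => hr ⟨hrl, hrS⟩) j hj]
    · exact padMat_apply_of_le L G r j (not_lt.1 hrl)

theorem TwoSenderForm.add_left {G N : Matrix ρ ι 𝕜} (hG : TwoSenderForm 𝕜 P1 P2 G)
    (hN : ∀ r, ∀ j ∈ P1 ∪ P2, N r j = 0) : TwoSenderForm 𝕜 P1 P2 (N + G) := by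
  obtain ⟨S, hS, hSc⟩ := hG
  refine ⟨S, fun r hr j hj => ?_, fun r hr j hj => ?_⟩
  · simp [hN r j (Or.inr hj), hS r hr j hj]
  · simp [hN r j (Or.inl hj), hSc r hr j hj]

end TwoSenderForm

section Decodable

variable {𝕜 : Type*} [Field 𝕜] {ρ ι : Type*} [Fintype ι] {K : ι → Set ι} {i : ι}

def Decodable (K : ι → Set ι) (G : Matrix ρ ι 𝕜) (i : ι) : Prop :=
  ∃ D : (ρ → 𝕜) → (K i → 𝕜) → 𝕜, ∀ x : ι → 𝕜, D (G *ᵥ x) (fun j => x j) = x i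

theorem validCode_iff_forall_decodable (G : Matrix ρ ι 𝕜) :
    ValidCode 𝕜 K G ↔ ∀ i, Decodable K G i :=
  Iff.rfl

theorem Decodable.add {G N : Matrix ρ ι 𝕜} (hG : Decodable K G i)
    (hN : ∀ r, ∀ j ∉ K i, N r j = 0) : Decodable K (G + N) i := by
  obtain ⟨D, hD⟩ := hG
  let lift (s : K i → 𝕜) : ι → 𝕜 := fun j => if h : j ∈ K i then s ⟨j, h⟩ else 0
  have hlift : ∀ x : ι → 𝕜, N *ᵥ lift (fun j => x j) = N *ᵥ x := by
    intro x
    ext r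
    refine Finset.sum_congr rfl fun j _ => ?_
    by_cases hj : j ∈ K i
    · simp [lift, hj]
    · simp [hN r j hj]
  refine ⟨fun y s => D (y - N *ᵥ lift s) s, fun x => ?_⟩
  change D (_ - N *ᵥ lift fun j => x j) _ = _
  rw [hlift, add_mulVec, add_sub_cancel_right, hD]

theorem Decodable.of_submatrix_rows {σ : Type*} {G : Matrix ρ ι 𝕜} (e : σ → ρ)
    (hG : Decodable K (G.submatrix e id) i) : Decodable K G i := by
  obtain ⟨D, hD⟩ := hG
  exact ⟨fun y s => D (y ∘ e) s, hD⟩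

theorem decodable_extendCols {S : Set ι} {H : Matrix ρ S 𝕜} (hH : ValidCode 𝕜 (subK K S) H)
    (hi : i ∈ S) : Decodable K (extendCols 𝕜 S H) i := by
  obtain ⟨D, hD⟩ := hH ⟨i, hi⟩
  refine ⟨fun y s => D y fun j => s ⟨j, j.2⟩, fun x => ?_⟩
  rw [extendCols_mulVec]
  exact hD _

end Decodable

section TwoSenderCode

variable {𝕜 : Type*} [Field 𝕜] {ι : Type*} {P1 P2 P12 : Set ι} {l1 l2 l12 : ℕ}

def twoSenderCode (L : ℕ) (G1 : Matrix (Fin l1) P1 𝕜) (G2 : Matrix (Fin l2) P2 𝕜)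
    (G12 : Matrix (Fin l12) P12 𝕜) : Matrix (Fin L) ι 𝕜 :=
  padMat 𝕜 L (extendCols 𝕜 P12 G12) +
    padMat 𝕜 L (stackRows (extendCols 𝕜 P1 G1) (extendCols 𝕜 P2 G2))

variable (h12 : Disjoint P1 P2) (h112 : Disjoint P1 P12) (h212 : Disjoint P2 P12) (L : ℕ)
  (G1 : Matrix (Fin l1) P1 𝕜) (G2 : Matrix (Fin l2) P2 𝕜) (G12 : Matrix (Fin l12) P12 𝕜)

include h12 h112 h212 in
theorem twoSenderForm_twoSenderCode : TwoSenderForm 𝕜 P1 P2 (twoSenderCode L G1 G2 G12) := by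
  refine TwoSenderForm.add_left (TwoSenderForm.padMat L (twoSenderForm_stackRows ?_ ?_)) ?_
  · exact fun r j hj => extendCols_apply_of_notMem G1 r (Set.disjoint_right.1 h12 hj)
  · exact fun r j hj => extendCols_apply_of_notMem G2 r (Set.disjoint_left.1 h12 hj)
  · rintro r j (hj | hj)
    · exact padMat_apply_eq_zero L (fun r => extendCols_apply_of_notMem G12 r
        (Set.disjoint_left.1 h112 hj)) r
    · exact padMat_apply_eq_zero L (fun r => extendCols_apply_of_notMem G12 r
        (Set.disjoint_left.1 h212 hj)) r

theorem twoSenderCode_submatrix_cols {κ : Type*} (f : κ → ι) :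
    (twoSenderCode L G1 G2 G12).submatrix id f =
      padMat 𝕜 L ((extendCols 𝕜 P12 G12).submatrix id f) +
        padMat 𝕜 L (stackRows ((extendCols 𝕜 P1 G1).submatrix id f)
          ((extendCols 𝕜 P2 G2).submatrix id f)) := by
  rw [twoSenderCode, submatrix_add, Pi.add_apply, Pi.add_apply, padMat_submatrix_cols,
    padMat_submatrix_cols, stackRows_submatrix_cols]

include h12 h112 in
theorem rowSpace_twoSenderCode_restrict_left_le :
    rowSpace 𝕜 ((twoSenderCode L G1 G2 G12).submatrix id (Subtype.val : P1 → ι)) ≤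
      rowSpace 𝕜 G1 := by
  rw [twoSenderCode_submatrix_cols, extendCols_submatrix_val_of_disjoint h112.symm,
    extendCols_submatrix_val_of_disjoint h12.symm, extendCols_submatrix_val, padMat_zero,
    zero_add]
  exact (rowSpace_padMat_le L _).trans ((rowSpace_stackRows_le _ _).trans (by simp))

include h12 h212 in
theorem rowSpace_twoSenderCode_restrict_right_le :
    rowSpace 𝕜 ((twoSenderCode L G1 G2 G12).submatrix id (Subtype.val : P2 → ι)) ≤
      rowSpace 𝕜 G2 := by
  rw [twoSenderCode_submatrix_cols, extendCols_submatrix_val_of_disjoint h212.symm,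
    extendCols_submatrix_val_of_disjoint h12, extendCols_submatrix_val, padMat_zero, zero_add]
  exact (rowSpace_padMat_le L _).trans ((rowSpace_stackRows_le _ _).trans (by simp))

include h112 h212 in
theorem rowSpace_twoSenderCode_restrict_common_le :
    rowSpace 𝕜 ((twoSenderCode L G1 G2 G12).submatrix id (Subtype.val : P12 → ι)) ≤
      rowSpace 𝕜 G12 := by
  rw [twoSenderCode_submatrix_cols, extendCols_submatrix_val_of_disjoint h112,
    extendCols_submatrix_val_of_disjoint h212, extendCols_submatrix_val, stackRows_zero,
    padMat_zero, add_zero]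
  exact rowSpace_padMat_le L _

include h12 h112 h212 in
theorem weaklySecure_twoSenderCode (hcov : P1 ∪ P2 ∪ P12 = Set.univ) {A : Set ι}
    (hG1 : WeaklySecure 𝕜 G1 (Subtype.val ⁻¹' A)) (hG2 : WeaklySecure 𝕜 G2 (Subtype.val ⁻¹' A))
    (hG12 : WeaklySecure 𝕜 G12 (Subtype.val ⁻¹' A)) :
    WeaklySecure 𝕜 (twoSenderCode L G1 G2 G12) A := by
  intro i hiA u hu
  obtain (hi | hi) | hi : i ∈ P1 ∪ P2 ∪ P12 := hcov ▸ Set.mem_univ i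
  · exact hG1.of_restrict (rowSpace_twoSenderCode_restrict_left_le h12 h112 ..) hi hiA hu
  · exact hG2.of_restrict (rowSpace_twoSenderCode_restrict_right_le h12 h212 ..) hi hiA hu
  · exact hG12.of_restrict (rowSpace_twoSenderCode_restrict_common_le h112 h212 ..) hi hiA hu

variable [Fintype ι] {K : ι → Set ι} {i : ι}

theorem decodable_twoSenderCode_left (hL : l1 + l2 ≤ L) (hG1 : ValidCode 𝕜 (subK K P1) G1)
    (hi : i ∈ P1) (hK : P12 ⊆ K i) : Decodable K (twoSenderCode L G1 G2 G12) i := by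
  rw [twoSenderCode, add_comm]
  refine Decodable.add ?_ fun r j hj =>
    padMat_apply_eq_zero L (fun r => extendCols_apply_of_notMem G12 r fun h => hj (hK h)) r
  refine Decodable.of_submatrix_rows (Fin.castLE hL) ?_
  rw [padMat_submatrix_castLE]
  refine Decodable.of_submatrix_rows (Fin.castAdd l2) ?_
  rw [stackRows_submatrix_castAdd]
  exact decodable_extendCols hG1 hi

theorem decodable_twoSenderCode_right (hL : l1 + l2 ≤ L) (hG2 : ValidCode 𝕜 (subK K P2) G2)
    (hi : i ∈ P2) (hK : P12 ⊆ K i) : Decodable K (twoSenderCode L G1 G2 G12) i := by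
  rw [twoSenderCode, add_comm]
  refine Decodable.add ?_ fun r j hj =>
    padMat_apply_eq_zero L (fun r => extendCols_apply_of_notMem G12 r fun h => hj (hK h)) r
  refine Decodable.of_submatrix_rows (Fin.castLE hL) ?_
  rw [padMat_submatrix_castLE]
  refine Decodable.of_submatrix_rows (Fin.natAdd l1) ?_
  rw [stackRows_submatrix_natAdd]
  exact decodable_extendCols hG2 hi

theorem decodable_twoSenderCode_common (hL : l12 ≤ L) (hG12 : ValidCode 𝕜 (subK K P12) G12)
    (hi : i ∈ P12) (hK : P1 ∪ P2 ⊆ K i) : Decodable K (twoSenderCode L G1 G2 G12) i := by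
  refine Decodable.add ?_ fun r j hj => padMat_apply_eq_zero L (stackRows_apply_eq_zero
    (fun r => extendCols_apply_of_notMem G1 r fun h => hj (hK (Or.inl h)))
    (fun r => extendCols_apply_of_notMem G2 r fun h => hj (hK (Or.inr h)))) r
  refine Decodable.of_submatrix_rows (Fin.castLE hL) ?_
  rw [padMat_submatrix_castLE]
  exact decodable_extendCols hG12 hi

end TwoSenderCode

theorem max_mem_twoLens {𝕜 ι : Type*} [Field 𝕜] [Fintype ι] {P1 P2 P12 : Set ι}
    (h12 : Disjoint P1 P2) (h112 : Disjoint P1 P12) (h212 : Disjoint P2 P12)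
    (hcov : P1 ∪ P2 ∪ P12 = Set.univ) {K : ι → Set ι} (hfull1 : ∀ i ∈ P1 ∪ P2, P12 ⊆ K i)
    (hfull2 : ∀ j ∈ P12, P1 ∪ P2 ⊆ K j) {A : Set ι} {l1 l2 l12 : ℕ}
    (h1 : l1 ∈ oneLens 𝕜 (subK K P1) (Subtype.val ⁻¹' A))
    (h2 : l2 ∈ oneLens 𝕜 (subK K P2) (Subtype.val ⁻¹' A))
    (h12' : l12 ∈ oneLens 𝕜 (subK K P12) (Subtype.val ⁻¹' A)) :
    max l12 (l1 + l2) ∈ twoLens 𝕜 P1 P2 K A := by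
  obtain ⟨G1, hG1v, hG1s⟩ := h1
  obtain ⟨G2, hG2v, hG2s⟩ := h2
  obtain ⟨G12, hG12v, hG12s⟩ := h12'
  refine ⟨twoSenderCode _ G1 G2 G12, twoSenderForm_twoSenderCode h12 h112 h212 ..,
    (validCode_iff_forall_decodable _).2 fun i => ?_,
    weaklySecure_twoSenderCode h12 h112 h212 _ _ _ _ hcov hG1s hG2s hG12s⟩
  obtain (hi | hi) | hi : i ∈ P1 ∪ P2 ∪ P12 := hcov ▸ Set.mem_univ i
  · exact decodable_twoSenderCode_left _ _ _ _ (le_max_right _ _) hG1v hi (hfull1 i (.inl hi))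
  · exact decodable_twoSenderCode_right _ _ _ _ (le_max_right _ _) hG2v hi (hfull1 i (.inr hi))
  · exact decodable_twoSenderCode_common _ _ _ _ (le_max_left _ _) hG12v hi (hfull2 i hi)

theorem caseIIB_exists_code {m l1 l2 l12 : ℕ}
    (P1 P2 P12 : Set (Fin m))
    (h12 : Disjoint P1 P2) (h112 : Disjoint P1 P12) (h212 : Disjoint P2 P12)
    (hcov : P1 ∪ P2 ∪ P12 = Set.univ)
    (K : Fin m → Set (Fin m))
    (hfull1 : ∀ i ∈ P1 ∪ P2, P12 ⊆ K i)
    (hfull2 : ∀ j ∈ P12, P1 ∪ P2 ⊆ K j)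
    (A : Set (Fin m))
    (G1 : Matrix (Fin l1) ↥P1 F) (G2 : Matrix (Fin l2) ↥P2 F)
    (G12 : Matrix (Fin l12) ↥P12 F)
    (hG1v : ValidCode F (subK K P1) G1)
    (hG1s : WeaklySecure F G1 (Subtype.val ⁻¹' A))
    (hG2v : ValidCode F (subK K P2) G2)
    (hG2s : WeaklySecure F G2 (Subtype.val ⁻¹' A))
    (hG12v : ValidCode F (subK K P12) G12)
    (hG12s : WeaklySecure F G12 (Subtype.val ⁻¹' A)) :
    (∃ G : Matrix (Fin (max l12 (l1 + l2))) (Fin m) F,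
        TwoSenderForm F P1 P2 G ∧ ValidCode F K G ∧ WeaklySecure F G A) ∧
    sInf (twoLens F P1 P2 K A) ≤
      max (sInf (oneLens F (subK K P12) (Subtype.val ⁻¹' A)))
        (sInf (oneLens F (subK K P1) (Subtype.val ⁻¹' A)) +
          sInf (oneLens F (subK K P2) (Subtype.val ⁻¹' A))) := by
  have h1 : l1 ∈ oneLens F (subK K P1) (Subtype.val ⁻¹' A) := ⟨G1, hG1v, hG1s⟩
  have h2 : l2 ∈ oneLens F (subK K P2) (Subtype.val ⁻¹' A) := ⟨G2, hG2v, hG2s⟩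
  have h12' : l12 ∈ oneLens F (subK K P12) (Subtype.val ⁻¹' A) := ⟨G12, hG12v, hG12s⟩
  exact ⟨max_mem_twoLens h12 h112 h212 hcov hfull1 hfull2 h1 h2 h12',
    Nat.sInf_le (max_mem_twoLens h12 h112 h212 hcov hfull1 hfull2
      (Nat.sInf_mem ⟨_, h1⟩) (Nat.sInf_mem ⟨_, h2⟩) (Nat.sInf_mem ⟨_, h12'⟩))⟩
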